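/- Let u : ℝⁿ → ℝⁿ be a C¹ vector field and a₀ a continuous symbol assigning to each x ∈ ℝⁿ and ξ ∈ ℝⁿ∖{0} an n×n complex matrix. Assume that for all x ∈ ℝⁿ, ξ ∈ ℝⁿ∖{0}, and b ∈ ℂⁿ with b·ξ = 0, one has (a₀(x,ξ) b)·ξ = (Du(x) b)·ξ. Then the bicharacteristic-amplitude system preserves the incompressibility constraint: for every solution (x, ξ, b) of the BAS with ξ(t) ≠ 0 for all t and b(0)·ξ(0) = 0, one has b(t)·ξ(t) = 0 for all t. -/

import Mathlib

/-!
Along a solution, `f(t) = b(t)·ξ(t)` satisfies `f' = (a₀ b)·ξ - (Du b)·ξ`. Splitting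
`b = b₀ + (f/|ξ|²) ξ` with `b₀·ξ = 0`, the hypothesis on `a₀` kills the `b₀` part, so
`f' = k f` for a continuous scalar `k`. A scalar linear ODE preserves the value `0`:
`exp(-∫ k) f` has derivative `0`.
-/

/-- The Jacobian matrix `Du(x)` of a vector field `u : ℝⁿ → ℝⁿ`. -/
noncomputable def jacobian {n : ℕ} (u : (Fin n → ℝ) → (Fin n → ℝ)) (x : Fin n → ℝ) :
    Matrix (Fin n) (Fin n) ℝ :=
  Matrix.of fun i j => fderiv ℝ u x (Pi.single j 1) i

open Matrix

theorem eq_zero_of_hasDerivAt_eq_smul_self {E : Type*} [NormedAddCommGroup E] [NormedSpace ℂ E]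
    {f : ℝ → E} {k : ℝ → ℂ} (hk : Continuous k) (hf : ∀ t, HasDerivAt f (k t • f t) t)
    {t₀ : ℝ} (h₀ : f t₀ = 0) (t : ℝ) : f t = 0 := by
  set g : ℝ → E := fun s => Complex.exp (-∫ r in t₀..s, k r) • f s
  have hg : ∀ s, HasDerivAt g 0 s := fun s => by
    have hK := (hk.integral_hasStrictDerivAt t₀ s).hasDerivAt.neg.cexp
    refine (hK.smul (hf s)).congr_deriv ?_
    rw [smul_smul, ← add_smul]
    simp
  have hconst := is_const_of_deriv_eq_zero (fun s => (hg s).differentiableAt)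
    (fun s => (hg s).deriv) t t₀
  simpa [g, h₀, Complex.exp_ne_zero] using hconst

theorem HasDerivAt.dotProduct {𝕜 𝔸 m : Type*} [NontriviallyNormedField 𝕜] [NormedRing 𝔸]
    [NormedAlgebra 𝕜 𝔸] [Fintype m] {f g : 𝕜 → m → 𝔸} {f' g' : m → 𝔸} {t : 𝕜}
    (hf : HasDerivAt f f' t) (hg : HasDerivAt g g' t) :
    HasDerivAt (fun s => f s ⬝ᵥ g s) (f' ⬝ᵥ g t + f t ⬝ᵥ g') t := by
  simp only [_root_.dotProduct, ← Finset.sum_add_distrib]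
  exact HasDerivAt.fun_sum fun i _ => (hasDerivAt_pi.1 hf i).mul (hasDerivAt_pi.1 hg i)

theorem mulVec_dotProduct_eq_mul_of_forall_dotProduct_eq_zero {K m : Type*} [Field K]
    [Fintype m] {C : Matrix m m K} {w : m → K} (hw : w ⬝ᵥ w ≠ 0)
    (hC : ∀ c, c ⬝ᵥ w = 0 → C *ᵥ c ⬝ᵥ w = 0) (b : m → K) :
    C *ᵥ b ⬝ᵥ w = (C *ᵥ w ⬝ᵥ w / (w ⬝ᵥ w)) * (b ⬝ᵥ w) := by
  have hc := hC (b - (b ⬝ᵥ w / (w ⬝ᵥ w)) • w) (by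
    rw [sub_dotProduct, smul_dotProduct, smul_eq_mul, div_mul_cancel₀ _ hw, sub_self])
  rw [mulVec_sub, mulVec_smul, sub_dotProduct, smul_dotProduct, smul_eq_mul,
    sub_eq_zero] at hc
  rw [hc]
  ring

theorem ofReal_dotProduct_self_ne_zero {m : Type*} [Fintype m] {v : m → ℝ} (hv : v ≠ 0) :
    (Complex.ofReal ∘ v) ⬝ᵥ (Complex.ofReal ∘ v) ≠ 0 := by
  have h : (Complex.ofReal ∘ v) ⬝ᵥ (Complex.ofReal ∘ v) = ((v ⬝ᵥ v : ℝ) : ℂ) :=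
    (RingHom.map_dotProduct Complex.ofRealHom v v).symm
  rw [h, Complex.ofReal_ne_zero, Ne, dotProduct_self_eq_zero]
  exact hv

theorem dotProduct_ofReal_transpose_mulVec {m : Type*} [Fintype m] (M : Matrix m m ℝ)
    (v : m → ℝ) (c : m → ℂ) :
    c ⬝ᵥ (Complex.ofReal ∘ (Mᵀ *ᵥ v)) = M.map Complex.ofReal *ᵥ c ⬝ᵥ (Complex.ofReal ∘ v) := by
  have h : Complex.ofReal ∘ (Mᵀ *ᵥ v) = (M.map Complex.ofReal)ᵀ *ᵥ (Complex.ofReal ∘ v) :=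
    funext fun i => RingHom.map_mulVec Complex.ofRealHom Mᵀ v i
  rw [h, mulVec_transpose, dotProduct_comm, ← dotProduct_mulVec, dotProduct_comm]

theorem hasDerivAt_dotProduct_ofReal_of_hasDerivAt_mulVec {m : Type*} [Fintype m]
    {b : ℝ → m → ℂ} {ξ : ℝ → m → ℝ} {A : Matrix m m ℂ} {M : Matrix m m ℝ} {t : ℝ}
    (hb : HasDerivAt b (A *ᵥ b t) t) (hξ : HasDerivAt ξ (-(Mᵀ *ᵥ ξ t)) t) :
    HasDerivAt (fun s => b s ⬝ᵥ (Complex.ofReal ∘ ξ s))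
      ((A - M.map Complex.ofReal) *ᵥ b t ⬝ᵥ (Complex.ofReal ∘ ξ t)) t := by
  have hξc := hasDerivAt_pi.2 fun i => (hasDerivAt_pi.1 hξ i).ofReal_comp
  refine (hb.dotProduct hξc).congr_deriv ?_
  have hbMξ : (b t ⬝ᵥ fun i => ((-(Mᵀ *ᵥ ξ t)) i : ℂ))
      = -(M.map Complex.ofReal *ᵥ b t ⬝ᵥ (Complex.ofReal ∘ ξ t)) := by
    rw [← dotProduct_ofReal_transpose_mulVec, ← dotProduct_neg]
    congr 1
    ext i
    simp
  rw [hbMξ, sub_mulVec, sub_dotProduct, sub_eq_add_neg]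
  rfl

theorem continuous_jacobian {n : ℕ} {u : (Fin n → ℝ) → (Fin n → ℝ)} (hu : ContDiff ℝ 1 u) :
    Continuous (jacobian u) :=
  continuous_matrix fun i _ =>
    (continuous_apply i).comp ((hu.continuous_fderiv one_ne_zero).clm_apply continuous_const)

/-- If the symbol `a₀` satisfies `(a₀(x,ξ) b)·ξ = (Du(x) b)·ξ` for all
`b` with `b·ξ = 0`, then the bicharacteristic-amplitude system preserves the
incompressibility constraint `b(t)·ξ(t) = 0`. -/
theorem stmt_10 {n : ℕ}
    (u : (Fin n → ℝ) → (Fin n → ℝ)) (hu : ContDiff ℝ 1 u)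
    (a₀ : (Fin n → ℝ) → (Fin n → ℝ) → Matrix (Fin n) (Fin n) ℂ)
    (ha₀ : ContinuousOn (fun p : (Fin n → ℝ) × (Fin n → ℝ) => a₀ p.1 p.2)
      {p | p.2 ≠ 0})
    (hrel : ∀ (y ξ : Fin n → ℝ), ξ ≠ 0 → ∀ b : Fin n → ℂ,
      (∑ i, b i * (ξ i : ℂ)) = 0 →
      (∑ i, ((a₀ y ξ).mulVec b) i * (ξ i : ℂ))
        = ∑ i, (((jacobian u y).map Complex.ofReal).mulVec b) i * (ξ i : ℂ))
    (x : ℝ → Fin n → ℝ) (ξ : ℝ → Fin n → ℝ) (b : ℝ → Fin n → ℂ)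
    (hξne : ∀ t, ξ t ≠ 0)
    (hx : ∀ t, HasDerivAt x (u (x t)) t)
    (hξ : ∀ t, HasDerivAt ξ (-((jacobian u (x t)).transpose.mulVec (ξ t))) t)
    (hb : ∀ t, HasDerivAt b ((a₀ (x t) (ξ t)).mulVec (b t)) t)
    (hb0 : (∑ i, b 0 i * (ξ 0 i : ℂ)) = 0) :
    ∀ t : ℝ, (∑ i, b t i * (ξ t i : ℂ)) = 0 := by
  set ξc : ℝ → Fin n → ℂ := fun t => Complex.ofReal ∘ ξ t
  set A : ℝ → Matrix (Fin n) (Fin n) ℂ :=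
    fun t => a₀ (x t) (ξ t) - (jacobian u (x t)).map Complex.ofReal
  set k : ℝ → ℂ := fun t => A t *ᵥ ξc t ⬝ᵥ ξc t / (ξc t ⬝ᵥ ξc t)
  have hk : Continuous k := by
    have hxc : Continuous x := continuous_iff_continuousAt.2 fun t => (hx t).continuousAt
    have hξc : Continuous ξ := continuous_iff_continuousAt.2 fun t => (hξ t).continuousAt
    have hξcc : Continuous ξc := continuous_pi fun i =>
      Complex.continuous_ofReal.comp ((continuous_apply i).comp hξc)
    have hAc : Continuous A := (ha₀.comp_continuous (hxc.prodMk hξc) hξne).sub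
      (((continuous_jacobian hu).comp hxc).matrix_map Complex.continuous_ofReal)
    exact ((hAc.matrix_mulVec hξcc).dotProduct hξcc).div (hξcc.dotProduct hξcc)
      fun t => ofReal_dotProduct_self_ne_zero (hξne t)
  have hAker : ∀ t c, c ⬝ᵥ ξc t = 0 → A t *ᵥ c ⬝ᵥ ξc t = 0 := fun t c hc => by
    rw [sub_mulVec, sub_dotProduct, sub_eq_zero]
    exact hrel _ _ (hξne t) c hc
  have hf : ∀ t, HasDerivAt (fun s => b s ⬝ᵥ ξc s) (k t • (b t ⬝ᵥ ξc t)) t := fun t => by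
    rw [smul_eq_mul, ← mulVec_dotProduct_eq_mul_of_forall_dotProduct_eq_zero
      (ofReal_dotProduct_self_ne_zero (hξne t)) (hAker t)]
    exact hasDerivAt_dotProduct_ofReal_of_hasDerivAt_mulVec (hb t) (hξ t)
  exact eq_zero_of_hasDerivAt_eq_smul_self hk hf hb0
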